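/- arXiv:1606.01461 — 4 statements merged into one kernel-verified Lean document; each statement's English description precedes it below -/
import Mathlib

section
/- The map (t, x, y, z) ↦ (−t, π/2 − y, π/2 − x, π/2 − z) is a time-reversal symmetry of the ABC flow with B = C = 1: if (x(t), y(t), z(t)) solves the system, then so does (π/2 − y(−t), π/2 − x(−t), π/2 − z(−t)). -/
open Real

lemma aux_rev {f : ℝ → ℝ} {d c t : ℝ} (hf : HasDerivAt f d (-t)) :
    HasDerivAt (fun s : ℝ => c - f (-s)) d t := by
  have h := (hf.comp t (hasDerivAt_neg t)).const_sub c
  simpa using h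

/-- Time-reversal symmetry (t,x,y,z) ↦ (-t, π/2 - y, π/2 - x, π/2 - z) of the ABC flow
with B = C = 1. -/
theorem abc_symmetry_two (ε : ℝ) (x y z : ℝ → ℝ)
    (hx : ∀ t, HasDerivAt x (Real.cos (y t) + ε * Real.sin (z t)) t)
    (hy : ∀ t, HasDerivAt y (Real.sin (x t) + ε * Real.cos (z t)) t)
    (hz : ∀ t, HasDerivAt z (Real.cos (x t) + Real.sin (y t)) t) :
    (∀ t, HasDerivAt (fun s : ℝ => Real.pi / 2 - y (-s))
        (Real.cos (Real.pi / 2 - x (-t)) + ε * Real.sin (Real.pi / 2 - z (-t))) t) ∧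
    (∀ t, HasDerivAt (fun s : ℝ => Real.pi / 2 - x (-s))
        (Real.sin (Real.pi / 2 - y (-t)) + ε * Real.cos (Real.pi / 2 - z (-t))) t) ∧
    (∀ t, HasDerivAt (fun s : ℝ => Real.pi / 2 - z (-s))
        (Real.cos (Real.pi / 2 - y (-t)) + Real.sin (Real.pi / 2 - x (-t))) t) := by
  refine ⟨fun t => ?_, fun t => ?_, fun t => ?_⟩
  · simpa [Real.cos_pi_div_two_sub, Real.sin_pi_div_two_sub] using aux_rev (hy (-t))
  · simpa [Real.cos_pi_div_two_sub, Real.sin_pi_div_two_sub] using aux_rev (hx (-t))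
  · simpa [Real.cos_pi_div_two_sub, Real.sin_pi_div_two_sub, add_comm] using aux_rev (hz (-t))
end

section
/- The point (arcsin(ε/√2), arcsin(ε/√2) − π/2, 5π/4) is a stationary point of the ABC flow system x' = cos y + ε sin z, y' = sin x + ε cos z, z' = cos x + sin y, for any ε ∈ [0, √2]. -/
open Real

/-- The point (arcsin(ε/√2), arcsin(ε/√2) - π/2, 5π/4) is a stationary point of the ABC flow
x' = cos y + ε sin z, y' = sin x + ε cos z, z' = cos x + sin y, for ε ∈ [0, √2]. -/
theorem abc_stationary_point (ε : ℝ) (hε : ε ∈ Set.Icc (0 : ℝ) (Real.sqrt 2)) :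
    Real.cos (Real.arcsin (ε / Real.sqrt 2) - Real.pi / 2)
        + ε * Real.sin (5 * Real.pi / 4) = 0 ∧
    Real.sin (Real.arcsin (ε / Real.sqrt 2))
        + ε * Real.cos (5 * Real.pi / 4) = 0 ∧
    Real.cos (Real.arcsin (ε / Real.sqrt 2))
        + Real.sin (Real.arcsin (ε / Real.sqrt 2) - Real.pi / 2) = 0 := by
  obtain ⟨h0, h2⟩ := hε
  have hs : (0:ℝ) < Real.sqrt 2 := by positivity
  have hle : ε / Real.sqrt 2 ≤ 1 := by
    rw [div_le_one hs]; exact h2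
  have hge : (-1:ℝ) ≤ ε / Real.sqrt 2 := by
    have : (0:ℝ) ≤ ε / Real.sqrt 2 := by positivity
    linarith
  have hsin : Real.sin (Real.arcsin (ε / Real.sqrt 2)) = ε / Real.sqrt 2 :=
    Real.sin_arcsin hge hle
  have h54 : (5 * Real.pi / 4) = Real.pi / 4 + Real.pi := by ring
  have hsin54 : Real.sin (5 * Real.pi / 4) = -(Real.sqrt 2 / 2) := by
    rw [h54, Real.sin_add_pi, Real.sin_pi_div_four]
  have hcos54 : Real.cos (5 * Real.pi / 4) = -(Real.sqrt 2 / 2) := by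
    rw [h54, Real.cos_add_pi, Real.cos_pi_div_four]
  have hsq : Real.sqrt 2 * Real.sqrt 2 = 2 := Real.mul_self_sqrt (by norm_num)
  have key : ε / Real.sqrt 2 - ε * (Real.sqrt 2 / 2) = 0 := by
    field_simp
    nlinarith [hsq]
  refine ⟨?_, ?_, ?_⟩
  · rw [Real.cos_sub_pi_div_two, hsin, hsin54]; linarith [key]
  · rw [hsin, hcos54]; linarith [key]
  · rw [Real.sin_sub_pi_div_two]; ring
end

section
/- If x̂ : ℝ → ℝ solves x̂'(t) = sin x̂(t) + ε/√2, then (x(t), y(t), z(t)) = (x̂(t), x̂(t) − π/2, π/4) is a solution of the ABC flow system x' = cos y + ε sin z, y' = sin x + ε cos z, z' = cos x + sin y. -/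
open Real

/-- If x̂' = sin x̂ + ε/√2, then (x̂, x̂ - π/2, π/4) solves the ABC flow
x' = cos y + ε sin z, y' = sin x + ε cos z, z' = cos x + sin y. -/
theorem abc_edge_straight_line_solution (ε : ℝ) (xh : ℝ → ℝ)
    (h : ∀ t, HasDerivAt xh (Real.sin (xh t) + ε / Real.sqrt 2) t) :
    (∀ t, HasDerivAt xh
        (Real.cos (xh t - Real.pi / 2) + ε * Real.sin (Real.pi / 4)) t) ∧
    (∀ t, HasDerivAt (fun s : ℝ => xh s - Real.pi / 2)
        (Real.sin (xh t) + ε * Real.cos (Real.pi / 4)) t) ∧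
    (∀ t, HasDerivAt (fun _ : ℝ => Real.pi / 4)
        (Real.cos (xh t) + Real.sin (xh t - Real.pi / 2)) t) := by
  have key : ∀ x : ℝ, ε / Real.sqrt 2 = ε * Real.sin (Real.pi / 4) := by
    intro x
    rw [Real.sin_pi_div_four]
    rw [div_eq_mul_inv]
    congr 1
    rw [eq_div_iff (by norm_num : (2:ℝ) ≠ 0), inv_mul_eq_div,
      div_eq_iff (Real.sqrt_ne_zero'.2 (by norm_num))]
    rw [← Real.sqrt_mul_self (by positivity : (0:ℝ) ≤ Real.sqrt 2)]
    ring_nf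
    rw [Real.sq_sqrt] <;> norm_num
  refine ⟨fun t => ?_, fun t => ?_, fun t => ?_⟩
  · have := h t
    rwa [Real.cos_sub_pi_div_two, ← key (xh t)]
  · have := (h t).sub_const (Real.pi / 2)
    rw [Real.cos_pi_div_four, ← Real.sin_pi_div_four, ← key 0]
    exact this
  · have : Real.cos (xh t) + Real.sin (xh t - Real.pi / 2) = 0 := by
      rw [Real.sin_sub_pi_div_two]; ring
    rw [this]
    exact hasDerivAt_const t _
end

section
/- If (x₁ + y₁)(t) = √2 sin(z₀ + π/4) cosh(t) gd(t) and (x₁ − y₁)(t) = √2 sin(z₀ − π/4) tanh(t), then these solve the first-order variational equations along the heteroclinic orbit with cos x₀(t) = tanh t: (x₁ + y₁)' = tanh(t)(x₁ + y₁) + (sin z₀ + cos z₀) and (x₁ − y₁)' = −tanh(t)(x₁ − y₁) + (sin z₀ − cos z₀), with (x₁ ± y₁)(0) = 0. -/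
open Real

lemma Real.hasDerivAt_tanh (x : ℝ) : HasDerivAt tanh (1 - tanh x ^ 2) x := by
  have hcosh : cosh x ≠ 0 := (cosh_pos x).ne'
  have h := (hasDerivAt_sinh x).div (hasDerivAt_cosh x) hcosh
  rw [show sinh / cosh = tanh from funext fun y => (tanh_eq_sinh_div_cosh y).symm] at h
  refine h.congr_deriv ?_
  rw [tanh_eq_sinh_div_cosh]
  field_simp

lemma Real.one_sub_tanh_half_sq_div_one_add_tanh_half_sq (x : ℝ) :
    (1 - tanh (x / 2) ^ 2) / (1 + tanh (x / 2) ^ 2) = (cosh x)⁻¹ := by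
  have hcosh : cosh x = cosh (x / 2) ^ 2 + sinh (x / 2) ^ 2 := by
    rw [← cosh_two_mul, mul_div_cancel₀ x two_ne_zero]
  have hcosh_half : cosh (x / 2) ≠ 0 := (cosh_pos _).ne'
  rw [tanh_eq_sinh_div_cosh, hcosh]
  field_simp
  linear_combination cosh_sq_sub_sinh_sq (x / 2)

lemma Real.hasDerivAt_gudermannian (t : ℝ) :
    HasDerivAt (fun s => 2 * arctan (tanh (s / 2))) (cosh t)⁻¹ t := by
  have h :=
    (((hasDerivAt_tanh (t / 2)).comp t ((hasDerivAt_id t).div_const 2)).arctan).const_mul 2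
  refine h.congr_deriv ?_
  rw [← one_sub_tanh_half_sq_div_one_add_tanh_half_sq]
  simp only [Function.comp_apply, id]
  field_simp

lemma Real.sqrt_two_mul_sin_add_pi_div_four (x : ℝ) :
    √2 * sin (x + π / 4) = sin x + cos x := by
  rw [sin_add, sin_pi_div_four, cos_pi_div_four]
  linear_combination (sin x / 2 + cos x / 2) * mul_self_sqrt (zero_le_two : (0 : ℝ) ≤ 2)

lemma Real.sqrt_two_mul_sin_sub_pi_div_four (x : ℝ) :
    √2 * sin (x - π / 4) = sin x - cos x := by
  rw [sin_sub, sin_pi_div_four, cos_pi_div_four]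
  linear_combination (sin x / 2 - cos x / 2) * mul_self_sqrt (zero_le_two : (0 : ℝ) ≤ 2)

lemma hasDerivAt_const_mul_cosh_mul_gudermannian (c t : ℝ) :
    HasDerivAt (fun s => c * cosh s * (2 * arctan (tanh (s / 2))))
      (tanh t * (c * cosh t * (2 * arctan (tanh (t / 2)))) + c) t := by
  refine (((hasDerivAt_cosh t).const_mul c).mul (hasDerivAt_gudermannian t)).congr_deriv ?_
  have hcosh : cosh t ≠ 0 := (cosh_pos t).ne'
  rw [tanh_eq_sinh_div_cosh t]
  field_simp

lemma hasDerivAt_const_mul_tanh (c t : ℝ) :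
    HasDerivAt (fun s => c * tanh s) (-tanh t * (c * tanh t) + c) t :=
  ((hasDerivAt_tanh t).const_mul c).congr_deriv (by ring)

/-- The functions u(t) = √2 sin(z₀+π/4) cosh(t) gd(t) and v(t) = √2 sin(z₀−π/4) tanh(t)
(with gd the Gudermannian function) solve the first-order variational equations along the
heteroclinic orbit: u' = tanh(t)·u + (sin z₀ + cos z₀), v' = −tanh(t)·v + (sin z₀ − cos z₀),
with u(0) = v(0) = 0. -/
theorem variational_equations_solution (z₀ : ℝ) :
    (∀ t : ℝ, HasDerivAt
        (fun s : ℝ => Real.sqrt 2 * Real.sin (z₀ + Real.pi / 4) * Real.cosh s *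
          (2 * Real.arctan (Real.tanh (s / 2))))
        (Real.tanh t * (Real.sqrt 2 * Real.sin (z₀ + Real.pi / 4) * Real.cosh t *
            (2 * Real.arctan (Real.tanh (t / 2))))
          + (Real.sin z₀ + Real.cos z₀)) t) ∧
    (∀ t : ℝ, HasDerivAt
        (fun s : ℝ => Real.sqrt 2 * Real.sin (z₀ - Real.pi / 4) * Real.tanh s)
        (-Real.tanh t * (Real.sqrt 2 * Real.sin (z₀ - Real.pi / 4) * Real.tanh t)
          + (Real.sin z₀ - Real.cos z₀)) t) ∧
    Real.sqrt 2 * Real.sin (z₀ + Real.pi / 4) * Real.cosh 0 *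
        (2 * Real.arctan (Real.tanh (0 / 2))) = 0 ∧
    Real.sqrt 2 * Real.sin (z₀ - Real.pi / 4) * Real.tanh 0 = 0 := by
  refine ⟨fun t => ?_, fun t => ?_, by simp, by simp⟩
  · simpa only [sqrt_two_mul_sin_add_pi_div_four] using
      hasDerivAt_const_mul_cosh_mul_gudermannian (sin z₀ + cos z₀) t
  · simpa only [sqrt_two_mul_sin_sub_pi_div_four] using
      hasDerivAt_const_mul_tanh (sin z₀ - cos z₀) t
end
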